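/- arXiv:1909.02691 — 2 statements merged into one kernel-verified Lean document; each statement's English description precedes it below -/
import Mathlib

section
/- Let H be a strictly 2-balanced graph with m_2(H) > 1. There exists a constant D = D(H) such that for every C > 0 and every sufficiently small c > 0 (depending on C and H), setting n := ⌊c·(k/\log k)^{m_2(H)}⌋ and p := C(\log k)/k, the probability that Δ^{(2)}_H ≥ D tends to 0 as k → ∞. -/
open Finset Filter
open scoped Classical

noncomputable section

/-- The potential edges (unordered pairs of distinct vertices) of the complete graph on `Fin n`. -/
def allEdges (n : ℕ) : Finset (Sym2 (Fin n)) :=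
  Finset.univ.filter fun e => ¬ e.IsDiag

/-- The probability that the binomial random graph `G_{n,p}` (a uniformly random subset of
`allEdges n`, each potential edge present independently with probability `p`) lies in `A`. -/
def gnpProb (n : ℕ) (p : ℝ) (A : Set (Finset (Sym2 (Fin n)))) : ℝ :=
  ∑ G ∈ (allEdges n).powerset,
    if G ∈ A then p ^ G.card * (1 - p) ^ ((allEdges n).card - G.card) else 0

/-- The vertices covered by a finite set of edges. -/
def edgeSupport {V : Type*} [Fintype V] (S : Finset (Sym2 V)) : Finset V :=
  Finset.univ.filter fun v => ∃ e ∈ S, v ∈ e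

/-- The 2-density value `(e_F - 1)/(v_F - 2)` of the subgraph `F` spanned by the edge set `S`
(with vertex set the support of `S`), which is `1/2` when `F = K₂`. -/
def m2value {V : Type*} [Fintype V] (S : Finset (Sym2 V)) : ℝ :=
  if 3 ≤ (edgeSupport S).card then
    ((S.card : ℝ) - 1) / ((edgeSupport S).card - 2)
  else (1 : ℝ) / 2

/-- The maximum 2-density over all subgraphs spanned by nonempty finite subsets of the
edge set `T`. -/
def m2set {V : Type*} [Fintype V] (T : Set (Sym2 V)) : ℝ :=
  sSup {q | ∃ S : Finset (Sym2 V), S.Nonempty ∧ ↑S ⊆ T ∧ q = m2value S}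

/-- `m₂(H)`: the maximum of `(e_F - 1)/(v_F - 2)` (resp. `1/2` for `F = K₂`) over all
subgraphs `F ⊆ H` with at least one edge. -/
def m2 {V : Type*} [Fintype V] (H : SimpleGraph V) : ℝ :=
  m2set H.edgeSet

/-- `H` is strictly 2-balanced: it has an edge and `m₂(F) < m₂(H)` for every proper
subgraph `F ⊊ H` with at least one edge. -/
def StrictlyTwoBalanced {V : Type*} [Fintype V] (H : SimpleGraph V) : Prop :=
  H.edgeSet.Nonempty ∧
    ∀ F : H.Subgraph, F ≠ ⊤ → F.edgeSet.Nonempty → m2set F.edgeSet < m2 H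

/-- `P = (W, S)` is a copy of `H` in the edge set `G`: `W` and `S` are the images of the
vertices and edges of `H` under an injection whose edge-image lies in `G`. -/
def IsCopyPair {h n : ℕ} (H : SimpleGraph (Fin h)) (G : Finset (Sym2 (Fin n)))
    (P : Finset (Fin n) × Finset (Sym2 (Fin n))) : Prop :=
  ∃ φ : Fin h ↪ Fin n,
    P.1 = Finset.univ.image ⇑φ ∧
    (↑P.2 : Set (Sym2 (Fin n))) = Sym2.map ⇑φ '' H.edgeSet ∧
    P.2 ⊆ G

/-- The collection of all copies of `H` in the edge set `G`. -/
def copies {h n : ℕ} (H : SimpleGraph (Fin h)) (G : Finset (Sym2 (Fin n))) :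
    Finset (Finset (Fin n) × Finset (Sym2 (Fin n))) :=
  Finset.univ.filter (IsCopyPair H G)

/-- `Δ²_H`: the maximum over pairs of distinct potential edges `f ≠ g` of the number of
copies of `H` in `G` containing both `f` and `g`. -/
def deltaH2 {h n : ℕ} (H : SimpleGraph (Fin h)) (G : Finset (Sym2 (Fin n))) : ℕ :=
  ((allEdges n ×ˢ allEdges n).filter fun fg => fg.1 ≠ fg.2).sup fun fg =>
    ((copies H G).filter fun P => fg.1 ∈ P.2 ∧ fg.2 ∈ P.2).card

/-!
If `Δ⁽²⁾_H` is large, some pair of edges `f ≠ g` lies in more copies of `H` than can fit inside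
any edge set on few vertices, so copies through `f, g` can be glued on one at a time, each one
escaping the union built so far. The excess `e - 1 - m₂(H) (v - 2)` is supermodular and vanishes
on a copy, while the overlap of a new copy with the union is a proper subgraph of the copy
containing `f, g`; strict 2-balancedness makes its excess at most `-δ` for a uniform `δ > 0`.
So each step gains `δ`, and after `N = ⌈2 m₂(H) / δ⌉` steps `G` contains a subgraph on at most
`(N + 1) h` vertices with excess at least `2 m₂(H)`. The expected number of such subgraphs on
`u` vertices is `O(n ^ u p ^ (m₂(H) (u - 2) + 1 + 2 m₂(H))) = O(log k / k)`.
-/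

variable {V W : Type*} [Fintype V] [Fintype W]

lemma mem_edgeSupport {S : Finset (Sym2 V)} {v : V} : v ∈ edgeSupport S ↔ ∃ e ∈ S, v ∈ e := by
  simp [edgeSupport]

lemma edgeSupport_mono {S T : Finset (Sym2 V)} (h : S ⊆ T) : edgeSupport S ⊆ edgeSupport T :=
  fun _ hv => by
    obtain ⟨e, he, hve⟩ := mem_edgeSupport.1 hv
    exact mem_edgeSupport.2 ⟨e, h he, hve⟩

lemma edgeSupport_union (S T : Finset (Sym2 V)) :
    edgeSupport (S ∪ T) = edgeSupport S ∪ edgeSupport T := by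
  ext v
  simp only [mem_edgeSupport, mem_union, or_and_right, exists_or]

lemma edgeSupport_image_sym2Map [DecidableEq W] (φ : V → W) (S : Finset (Sym2 V)) :
    edgeSupport (S.image (Sym2.map φ)) = (edgeSupport S).image φ := by
  ext w
  simp only [mem_edgeSupport, mem_image]
  constructor
  · rintro ⟨_, ⟨e, he, rfl⟩, hw⟩
    obtain ⟨v, hve, rfl⟩ := Sym2.mem_map.1 hw
    exact ⟨v, ⟨e, he, hve⟩, rfl⟩
  · rintro ⟨v, ⟨e, he, hve⟩, rfl⟩
    exact ⟨_, ⟨e, he, rfl⟩, Sym2.mem_map.2 ⟨v, hve, rfl⟩⟩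

lemma subset_image_offDiag_edgeSupport {S : Finset (Sym2 V)} (hS : ∀ e ∈ S, ¬ e.IsDiag) :
    S ⊆ (edgeSupport S).offDiag.image (Function.uncurry Sym2.mk) := by
  intro e he
  induction e with
  | _ a b =>
    refine mem_image.2 ⟨(a, b), mem_offDiag.2 ⟨?_, ?_, by simpa using hS _ he⟩, rfl⟩ <;>
      exact mem_edgeSupport.2 ⟨_, he, by simp⟩

lemma card_le_choose_card_edgeSupport {S : Finset (Sym2 V)} (hS : ∀ e ∈ S, ¬ e.IsDiag) :
    S.card ≤ (edgeSupport S).card.choose 2 :=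
  (card_le_card (subset_image_offDiag_edgeSupport hS)).trans (Sym2.card_image_offDiag _).le

lemma card_filter_card_edgeSupport_eq_le (𝓔 : Finset (Finset (Sym2 V)))
    (h𝓔 : ∀ E ∈ 𝓔, ∀ e ∈ E, ¬ e.IsDiag) (u : ℕ) :
    (𝓔.filter fun E => (edgeSupport E).card = u).card ≤ 2 ^ u.choose 2 * Fintype.card V ^ u := by
  have hsub : 𝓔.filter (fun E => (edgeSupport E).card = u) ⊆ (powersetCard u univ).biUnion
      fun U : Finset V => (U.offDiag.image (Function.uncurry Sym2.mk)).powerset := by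
    intro E hE
    obtain ⟨hE𝓔, hEu⟩ := mem_filter.1 hE
    exact mem_biUnion.2 ⟨edgeSupport E, mem_powersetCard.2 ⟨subset_univ _, hEu⟩,
      mem_powerset.2 (subset_image_offDiag_edgeSupport (h𝓔 E hE𝓔))⟩
  calc _ ≤ _ := card_le_card hsub
    _ ≤ _ := card_biUnion_le
    _ = ∑ _U ∈ powersetCard u (univ : Finset V), 2 ^ u.choose 2 :=
      sum_congr rfl fun U hU => by
        rw [card_powerset, Sym2.card_image_offDiag, (mem_powersetCard.1 hU).2]
    _ ≤ _ := by
      rw [sum_const, card_powersetCard, card_univ, smul_eq_mul, mul_comm]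
      exact Nat.mul_le_mul_left _ (Nat.choose_le_pow _ _)

def edgeExcess (a : ℝ) (S : Finset (Sym2 V)) : ℝ :=
  S.card - 1 - a * ((edgeSupport S).card - 2)

lemma edgeExcess_add_edgeExcess_le {a : ℝ} (ha : 0 ≤ a) (S T : Finset (Sym2 V)) :
    edgeExcess a S + edgeExcess a T ≤ edgeExcess a (S ∪ T) + edgeExcess a (S ∩ T) := by
  have hcard : ((S ∪ T).card : ℝ) + (S ∩ T).card = S.card + T.card := by
    exact_mod_cast card_union_add_card_inter S T
  have hsupp : (edgeSupport (S ∪ T)).card + (edgeSupport (S ∩ T)).card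
      ≤ (edgeSupport S).card + (edgeSupport T).card := by
    rw [edgeSupport_union, ← card_union_add_card_inter (edgeSupport S)]
    exact Nat.add_le_add_left (card_le_card (subset_inter (edgeSupport_mono inter_subset_left)
      (edgeSupport_mono inter_subset_right))) _
  replace hsupp := (Nat.cast_le (α := ℝ)).2 hsupp
  push_cast at hsupp
  simp only [edgeExcess]
  nlinarith [mul_le_mul_of_nonneg_left hsupp ha]

lemma edgeExcess_image_sym2Map [DecidableEq W] {φ : V → W} (hφ : Function.Injective φ) (a : ℝ)
    (S : Finset (Sym2 V)) : edgeExcess a (S.image (Sym2.map φ)) = edgeExcess a S := by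
  rw [edgeExcess, edgeExcess, card_image_of_injective _ (Sym2.map.injective hφ),
    edgeSupport_image_sym2Map, card_image_of_injective _ hφ]

lemma edgeExcess_neg_of_m2value_lt {S : Finset (Sym2 V)} {a : ℝ}
    (h3 : 3 ≤ (edgeSupport S).card) (h : m2value S < a) : edgeExcess a S < 0 := by
  have hv : (0 : ℝ) < (edgeSupport S).card - 2 := by
    have : (3 : ℝ) ≤ (edgeSupport S).card := by exact_mod_cast h3
    linarith
  rw [m2value, if_pos h3, div_lt_iff₀ hv] at h
  rw [edgeExcess]
  linarith

lemma edgeExcess_m2value {S : Finset (Sym2 V)} (h3 : 3 ≤ (edgeSupport S).card) :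
    edgeExcess (m2value S) S = 0 := by
  have hv : (0 : ℝ) < (edgeSupport S).card - 2 := by
    have : (3 : ℝ) ≤ (edgeSupport S).card := by exact_mod_cast h3
    linarith
  rw [edgeExcess, m2value, if_pos h3, div_mul_cancel₀ _ hv.ne']
  ring

lemma finite_m2values (T : Set (Sym2 V)) :
    {q | ∃ S : Finset (Sym2 V), S.Nonempty ∧ ↑S ⊆ T ∧ q = m2value S}.Finite :=
  (Set.finite_range (m2value (V := V))).subset fun _ ⟨S, _, _, hq⟩ => ⟨S, hq.symm⟩

lemma m2value_le_m2set {S : Finset (Sym2 V)} {T : Set (Sym2 V)} (hS : S.Nonempty)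
    (hST : ↑S ⊆ T) : m2value S ≤ m2set T :=
  le_csSup (finite_m2values T).bddAbove ⟨S, hS, hST, rfl⟩

lemma exists_m2value_eq_m2set {T : Set (Sym2 V)} (hT : T.Nonempty) :
    ∃ S : Finset (Sym2 V), S.Nonempty ∧ ↑S ⊆ T ∧ m2value S = m2set T := by
  obtain ⟨e, he⟩ := hT
  obtain ⟨S, hS, hST, hSeq⟩ := Set.Nonempty.csSup_mem
    (s := {q | ∃ S : Finset (Sym2 V), S.Nonempty ∧ ↑S ⊆ T ∧ q = m2value S})
    ⟨m2value {e}, {e}, singleton_nonempty e, by simpa using he, rfl⟩ (finite_m2values T)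
  exact ⟨S, hS, hST, hSeq.symm⟩

namespace StrictlyTwoBalanced

variable {H : SimpleGraph V}

lemma m2value_lt (hH : StrictlyTwoBalanced H) {S : Finset (Sym2 V)} (hS : S.Nonempty)
    (hSH : S ⊆ H.edgeFinset) (hne : S ≠ H.edgeFinset) : m2value S < m2 H := by
  set F := (⊤ : H.Subgraph).deleteEdges (H.edgeSet \ S)
  have hF : F.edgeSet = S := by
    ext e
    induction e with
    | _ a b =>
      have := @hSH s(a, b)
      simp only [F, SimpleGraph.Subgraph.mem_edgeSet, SimpleGraph.Subgraph.deleteEdges_adj,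
        SimpleGraph.Subgraph.top_adj, Set.mem_sdiff, SimpleGraph.mem_edgeSet, mem_coe,
        SimpleGraph.mem_edgeFinset] at this ⊢
      tauto
  have hFtop : F ≠ ⊤ := fun htop => hne <| coe_injective <| by
    rw [← hF, htop, SimpleGraph.Subgraph.edgeSet_top, SimpleGraph.coe_edgeFinset]
  have := hH.2 F hFtop (hF ▸ hS.coe_sort.elim fun e => ⟨e, e.2⟩)
  rw [hF] at this
  exact (m2value_le_m2set hS subset_rfl).trans_lt this

lemma edgeSupport_edgeFinset (hH : StrictlyTwoBalanced H) : edgeSupport H.edgeFinset = univ := by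
  refine eq_univ_of_forall fun v => ?_
  by_contra hv
  set F := (⊤ : H.Subgraph).deleteVerts {v}
  have hF : F.edgeSet = H.edgeSet := by
    ext e
    induction e with
    | _ a b =>
      have hav : H.Adj a b → a ≠ v ∧ b ≠ v := fun hab => by
        constructor <;> rintro rfl <;>
          exact hv (mem_edgeSupport.2 ⟨s(a, b), by simpa using hab, by simp⟩)
      simp only [F, SimpleGraph.Subgraph.mem_edgeSet, SimpleGraph.Subgraph.deleteVerts_adj,
        SimpleGraph.Subgraph.verts_top, SimpleGraph.Subgraph.top_adj, Set.mem_univ,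
        Set.mem_singleton_iff, SimpleGraph.mem_edgeSet]
      tauto
  have hFtop : F ≠ ⊤ := fun htop => by
    have : v ∈ F.verts := htop ▸ Set.mem_univ v
    simp [F] at this
  have := hH.2 F hFtop (hF ▸ hH.1)
  rw [hF] at this
  exact this.false

lemma m2_eq_m2value (hH : StrictlyTwoBalanced H) : m2 H = m2value H.edgeFinset := by
  obtain ⟨S, hS, hSH, hSeq⟩ := exists_m2value_eq_m2set hH.1
  have hSH' : S ⊆ H.edgeFinset := fun e he => by simpa using hSH he
  by_cases hne : S = H.edgeFinset
  · rw [m2, ← hSeq, hne]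
  · exact absurd (hSeq ▸ hH.m2value_lt hS hSH' hne) (lt_irrefl _)

lemma edgeExcess_edgeFinset (hH : StrictlyTwoBalanced H) (hm : 1 < m2 H) :
    edgeExcess (m2 H) H.edgeFinset = 0 := by
  rw [hH.m2_eq_m2value] at hm ⊢
  refine edgeExcess_m2value (not_lt.1 fun h3 => ?_)
  rw [m2value, if_neg (by omega)] at hm
  norm_num at hm

lemma edgeExcess_neg (hH : StrictlyTwoBalanced H) {S : Finset (Sym2 V)}
    (hSH : S ⊆ H.edgeFinset) (hne : S ≠ H.edgeFinset) (hS : 2 ≤ S.card) :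
    edgeExcess (m2 H) S < 0 := by
  have h3 : 3 ≤ (edgeSupport S).card := by
    have := hS.trans (card_le_choose_card_edgeSupport fun e he =>
      SimpleGraph.not_isDiag_of_mem_edgeSet H (SimpleGraph.mem_edgeFinset.1 (hSH he)))
    by_contra! h
    interval_cases (edgeSupport S).card <;> simp at this
  exact edgeExcess_neg_of_m2value_lt h3 (hH.m2value_lt (card_pos.1 (by omega)) hSH hne)

lemma exists_pos_forall_edgeExcess_le (hH : StrictlyTwoBalanced H) :
    ∃ δ > 0, ∀ S ⊆ H.edgeFinset, S ≠ H.edgeFinset → 2 ≤ S.card →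
      edgeExcess (m2 H) S ≤ -δ := by
  set 𝓢 := H.edgeFinset.powerset.filter fun S => S ≠ H.edgeFinset ∧ 2 ≤ S.card
  have : ∀ᶠ δ in nhdsWithin (0 : ℝ) (Set.Ioi 0), ∀ S ∈ 𝓢, δ < -edgeExcess (m2 H) S :=
    (Finset.eventually_all _).2 fun S hS => nhdsWithin_le_nhds <| eventually_lt_nhds <| by
      obtain ⟨hSH, hne, hS⟩ := by simpa [𝓢] using hS
      linarith [hH.edgeExcess_neg hSH hne hS]
  obtain ⟨δ, h𝓢, hδ⟩ := (this.and self_mem_nhdsWithin).exists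
  exact ⟨δ, hδ, fun S hSH hne hS => by linarith [h𝓢 S (by simp [𝓢, hSH, hne, hS])]⟩

end StrictlyTwoBalanced

theorem exists_edgeExcess_ge_of_forall_exists_not_subset {a δ : ℝ} (ha : 0 ≤ a) {m N : ℕ}
    {𝓒 : Set (Finset (Sym2 V))} {R G : Finset (Sym2 V)}
    (h𝓒 : ∀ P ∈ 𝓒, R ⊆ P ∧ P ⊆ G ∧ (edgeSupport P).card ≤ m ∧ 0 ≤ edgeExcess a P)
    (hgap : ∀ P ∈ 𝓒, ∀ F ⊆ P, F ≠ P → R ⊆ F → edgeExcess a F ≤ -δ)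
    (hescape : ∀ E : Finset (Sym2 V), (edgeSupport E).card ≤ N * m → ∃ P ∈ 𝓒, ¬ P ⊆ E) :
    ∃ E ⊆ G, (edgeSupport E).card ≤ (N + 1) * m ∧ N * δ ≤ edgeExcess a E := by
  suffices ∀ i ≤ N, ∃ E ⊆ G, R ⊆ E ∧ (edgeSupport E).card ≤ (i + 1) * m ∧
      i * δ ≤ edgeExcess a E by
    obtain ⟨E, hEG, -, hE⟩ := this N le_rfl
    exact ⟨E, hEG, hE⟩
  intro i hi
  induction i with
  | zero =>
    obtain ⟨P, hP, -⟩ := hescape ∅ (by simp [edgeSupport])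
    obtain ⟨hRP, hPG, hPm, hP⟩ := h𝓒 P hP
    exact ⟨P, hPG, hRP, by simpa using hPm, by simpa using hP⟩
  | succ i ih =>
    obtain ⟨E, hEG, hRE, hEm, hE⟩ := ih (by omega)
    obtain ⟨P, hP, hPE⟩ := hescape E (hEm.trans (Nat.mul_le_mul_right _ (by omega)))
    obtain ⟨hRP, hPG, hPm, hP0⟩ := h𝓒 P hP
    have hoverlap : edgeExcess a (E ∩ P) ≤ -δ := hgap P hP _ inter_subset_right
      (fun h => hPE (inter_eq_right.1 h)) (subset_inter hRE hRP)
    refine ⟨E ∪ P, union_subset hEG hPG, hRE.trans subset_union_left, ?_, ?_⟩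
    · calc (edgeSupport (E ∪ P)).card ≤ (edgeSupport E).card + (edgeSupport P).card := by
            rw [edgeSupport_union]
            exact card_union_le _ _
        _ ≤ (i + 1 + 1) * m := by rw [add_mul _ 1]; omega
    · push_cast
      linarith [edgeExcess_add_edgeExcess_le ha E P]

section Copies

variable {h n : ℕ} {H : SimpleGraph (Fin h)}

lemma IsCopyPair.exists_embedding {G : Finset (Sym2 (Fin n))}
    {P : Finset (Fin n) × Finset (Sym2 (Fin n))} (hP : IsCopyPair H G P) :
    ∃ φ : Fin h ↪ Fin n, P = (univ.image φ, H.edgeFinset.image (Sym2.map φ)) ∧ P.2 ⊆ G := by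
  obtain ⟨φ, h1, h2, h3⟩ := hP
  refine ⟨φ, Prod.ext h1 (coe_injective ?_), h3⟩
  rw [h2, coe_image, SimpleGraph.coe_edgeFinset]

lemma card_filter_copies_subset_le (hH : edgeSupport H.edgeFinset = univ)
    (G E : Finset (Sym2 (Fin n))) :
    ((copies H G).filter fun P => P.2 ⊆ E).card ≤ (edgeSupport E).card ^ h := by
  have hsub : (copies H G).filter (fun P => P.2 ⊆ E) ⊆
      (Fintype.piFinset fun _ : Fin h => edgeSupport E).image
        fun φ => (univ.image φ, H.edgeFinset.image (Sym2.map φ)) := by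
    intro P hP
    obtain ⟨hPG, hPE⟩ := mem_filter.1 hP
    obtain ⟨φ, rfl, -⟩ := (mem_filter.1 hPG).2.exists_embedding
    refine mem_image.2 ⟨φ, Fintype.mem_piFinset.2 fun x => edgeSupport_mono hPE ?_, rfl⟩
    rw [edgeSupport_image_sym2Map, hH]
    exact mem_image_of_mem _ (mem_univ x)
  calc _ ≤ _ := card_le_card hsub
    _ ≤ _ := card_image_le
    _ = _ := by simp

theorem exists_edgeExcess_ge_of_lt_deltaH2 (hH : StrictlyTwoBalanced H) (hm : 1 < m2 H)
    {δ : ℝ} (hδ : ∀ S ⊆ H.edgeFinset, S ≠ H.edgeFinset → 2 ≤ S.card → edgeExcess (m2 H) S ≤ -δ)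
    (N : ℕ) {G : Finset (Sym2 (Fin n))} (hG : (N * h) ^ h < deltaH2 H G) :
    ∃ E ⊆ G, (edgeSupport E).card ≤ (N + 1) * h ∧ N * δ ≤ edgeExcess (m2 H) E := by
  obtain ⟨⟨f, g⟩, hfg, hmany⟩ := Finset.lt_sup_iff.1 hG
  replace hfg : f ≠ g := (mem_filter.1 hfg).2
  set through := (copies H G).filter fun P => f ∈ P.2 ∧ g ∈ P.2
  refine exists_edgeExcess_ge_of_forall_exists_not_subset (𝓒 := Prod.snd '' {P | P ∈ through})
    (R := {f, g}) (by linarith) ?_ ?_ ?_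
  · rintro _ ⟨P, hP, rfl⟩
    obtain ⟨hPG, hf, hg⟩ := mem_filter.1 hP
    obtain ⟨φ, rfl, hG⟩ := (mem_filter.1 hPG).2.exists_embedding
    refine ⟨insert_subset hf (singleton_subset_iff.2 hg), hG, ?_, ?_⟩
    · rw [edgeSupport_image_sym2Map]
      exact card_image_le.trans (card_le_univ _) |>.trans (Fintype.card_fin h).le
    · rw [edgeExcess_image_sym2Map φ.injective, hH.edgeExcess_edgeFinset hm]
  · rintro _ ⟨P, hP, rfl⟩ F hFP hne hRF
    obtain ⟨φ, rfl, -⟩ := (mem_filter.1 (mem_filter.1 hP).1).2.exists_embedding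
    obtain ⟨S, hSH, rfl⟩ := subset_image_iff.1 hFP
    rw [edgeExcess_image_sym2Map φ.injective]
    refine hδ S hSH (fun h => hne (h ▸ rfl)) ?_
    rw [← card_image_of_injective S (Sym2.map.injective φ.injective)]
    exact (card_pair hfg).symm.le.trans (card_le_card hRF)
  · intro E hE
    have hfew : ((copies H G).filter fun P => P.2 ⊆ E).card < through.card :=
      (card_filter_copies_subset_le hH.edgeSupport_edgeFinset G E).trans_lt
        ((Nat.pow_le_pow_left hE h).trans_lt hmany)
    obtain ⟨P, hP, hPE⟩ := exists_mem_notMem_of_card_lt_card hfew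
    exact ⟨P.2, ⟨P, hP, rfl⟩, fun h => hPE (mem_filter.2 ⟨(mem_filter.1 hP).1, h⟩)⟩

end Copies

section Gnp

variable {n : ℕ} {p : ℝ}

lemma gnpProb_nonneg (hp0 : 0 ≤ p) (hp1 : p ≤ 1) (A : Set (Finset (Sym2 (Fin n)))) :
    0 ≤ gnpProb n p A :=
  sum_nonneg fun _ _ => ite_nonneg (mul_nonneg (pow_nonneg hp0 _)
    (pow_nonneg (sub_nonneg.2 hp1) _)) le_rfl

lemma sum_powerset_filter_superset_eq_pow {α : Type*} [DecidableEq α] {S E : Finset α}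
    (hE : E ⊆ S) (p : ℝ) :
    ∑ G ∈ S.powerset with E ⊆ G, p ^ G.card * (1 - p) ^ (S.card - G.card) = p ^ E.card := by
  have hIcc : S.powerset.filter (E ⊆ ·) = Icc E S := by
    ext G
    simp [and_comm]
  rw [hIcc, Icc_eq_image_powerset hE, sum_image fun _ h₁ _ h₂ h => by
    simpa [union_sdiff_left, sdiff_eq_self_of_disjoint, disjoint_of_subset_left
      (mem_powerset.1 h₁) disjoint_sdiff_self_left, disjoint_of_subset_left
      (mem_powerset.1 h₂) disjoint_sdiff_self_left] using congrArg (· \ E) h]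
  calc _ = ∑ t ∈ (S \ E).powerset,
        p ^ E.card * (p ^ t.card * (1 - p) ^ ((S \ E).card - t.card)) := by
        refine sum_congr rfl fun t ht => ?_
        have hdisj : Disjoint E t :=
          disjoint_of_subset_right (mem_powerset.1 ht) disjoint_sdiff
        have := card_sdiff_add_card_eq_card hE
        rw [card_union_of_disjoint hdisj, pow_add, mul_assoc]
        congr 3
        omega
    _ = p ^ E.card := by rw [← mul_sum, sum_pow_mul_eq_add_pow]; simp

lemma gnpProb_le_sum_pow_card (hp0 : 0 ≤ p) (hp1 : p ≤ 1) {A : Set (Finset (Sym2 (Fin n)))}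
    (𝓑 : Finset (Finset (Sym2 (Fin n)))) (h𝓑 : ∀ E ∈ 𝓑, E ⊆ allEdges n)
    (hA : ∀ G ⊆ allEdges n, G ∈ A → ∃ E ∈ 𝓑, E ⊆ G) :
    gnpProb n p A ≤ ∑ E ∈ 𝓑, p ^ E.card := by
  have hw : ∀ G : Finset (Sym2 (Fin n)),
      0 ≤ p ^ G.card * (1 - p) ^ ((allEdges n).card - G.card) := fun _ =>
    mul_nonneg (pow_nonneg hp0 _) (pow_nonneg (sub_nonneg.2 hp1) _)
  calc gnpProb n p A ≤ ∑ G ∈ (allEdges n).powerset, ∑ E ∈ 𝓑,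
        if E ⊆ G then p ^ G.card * (1 - p) ^ ((allEdges n).card - G.card) else 0 := by
        refine sum_le_sum fun G hG => ?_
        split_ifs with hGA
        · obtain ⟨E, hE𝓑, hEG⟩ := hA G (mem_powerset.1 hG) hGA
          calc _ = if E ⊆ G then p ^ G.card * (1 - p) ^ ((allEdges n).card - G.card) else 0 :=
                (if_pos hEG).symm
            _ ≤ _ := single_le_sum (f := fun E => if E ⊆ G then _ else 0)
                (fun E _ => ite_nonneg (hw G) le_rfl) hE𝓑
        · exact sum_nonneg fun E _ => ite_nonneg (hw G) le_rfl
    _ = ∑ E ∈ 𝓑, ∑ G ∈ (allEdges n).powerset with E ⊆ G,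
        p ^ G.card * (1 - p) ^ ((allEdges n).card - G.card) := by
        rw [sum_comm]
        simp only [sum_filter]
    _ = _ := sum_congr rfl fun E hE => sum_powerset_filter_superset_eq_pow (h𝓑 E hE) p

end Gnp

theorem gnpProb_le_of_exists_edgeExcess_ge {n K : ℕ} {p a t : ℝ} (hp0 : 0 < p) (hp1 : p ≤ 1)
    {A : Set (Finset (Sym2 (Fin n)))}
    (hA : ∀ G ∈ A, ∃ E ⊆ G, (edgeSupport E).card ≤ K ∧ t ≤ edgeExcess a E) :
    gnpProb n p A ≤
      ∑ u ∈ range (K + 1), 2 ^ u.choose 2 * ((n : ℝ) ^ u * p ^ (a * (u - 2) + 1 + t)) := by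
  set 𝓑 := (allEdges n).powerset.filter fun E => (edgeSupport E).card ≤ K ∧ t ≤ edgeExcess a E
  have h𝓑 : ∀ E ∈ 𝓑, E ⊆ allEdges n := fun E hE => mem_powerset.1 (mem_filter.1 hE).1
  have hfiber (u : ℕ) : ∑ E ∈ 𝓑 with (edgeSupport E).card = u, p ^ E.card ≤
      2 ^ u.choose 2 * ((n : ℝ) ^ u * p ^ (a * (u - 2) + 1 + t)) := by
    have hpow : ∀ E ∈ 𝓑.filter fun E => (edgeSupport E).card = u,
        p ^ E.card ≤ p ^ (a * (u - 2) + 1 + t) := fun E hE => by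
      obtain ⟨hE𝓑, rfl⟩ := mem_filter.1 hE
      have := (mem_filter.1 hE𝓑).2.2
      rw [edgeExcess] at this
      rw [← Real.rpow_natCast]
      exact Real.rpow_le_rpow_of_exponent_ge hp0 hp1 (by linarith)
    have hcount := card_filter_card_edgeSupport_eq_le 𝓑 (fun E hE e he =>
      (mem_filter.1 (h𝓑 E hE he)).2) u
    rw [Fintype.card_fin] at hcount
    calc _ ≤ ∑ E ∈ 𝓑 with (edgeSupport E).card = u, p ^ (a * (u - 2) + 1 + t) :=
          sum_le_sum hpow
      _ = (𝓑.filter fun E => (edgeSupport E).card = u).card * p ^ (a * (u - 2) + 1 + t) := by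
          rw [sum_const, nsmul_eq_mul]
      _ ≤ _ := by
          rw [← mul_assoc]
          gcongr
          exact_mod_cast hcount
  calc gnpProb n p A ≤ ∑ E ∈ 𝓑, p ^ E.card :=
        gnpProb_le_sum_pow_card hp0.le hp1 𝓑 h𝓑 fun G hG hGA => by
          obtain ⟨E, hEG, hE⟩ := hA G hGA
          exact ⟨E, mem_filter.2 ⟨mem_powerset.2 (hEG.trans hG), hE⟩, hEG⟩
    _ = ∑ u ∈ range (K + 1), ∑ E ∈ 𝓑 with (edgeSupport E).card = u, p ^ E.card :=
        (sum_fiberwise_of_maps_to (fun E hE =>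
          mem_range.2 (Nat.lt_succ_of_le (mem_filter.1 hE).2.1)) _).symm
    _ ≤ _ := sum_le_sum fun u _ => hfiber u

lemma tendsto_log_div_self_natCast :
    Tendsto (fun k : ℕ => Real.log k / k) atTop (nhds 0) :=
  Real.isLittleO_log_id_atTop.tendsto_div_nhds_zero.comp tendsto_natCast_atTop_atTop

lemma eventually_mul_log_div_self_mem_Ioc {C : ℝ} (hC : 0 < C) :
    ∀ᶠ k : ℕ in atTop, 0 < C * Real.log k / k ∧ C * Real.log k / k ≤ 1 := by
  have hlim : Tendsto (fun k : ℕ => C * Real.log k / k) atTop (nhds 0) := by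
    simpa [mul_div_assoc] using tendsto_log_div_self_natCast.const_mul C
  filter_upwards [eventually_ge_atTop 2, hlim.eventually_le_const one_pos] with k hk hk1
  have : (1 : ℝ) < k := by exact_mod_cast hk
  exact ⟨div_pos (mul_pos hC (Real.log_pos this)) (by linarith), hk1⟩

lemma floor_rpow_pow_mul_rpow_le {a c C r x : ℝ} {u : ℕ} (hc : 0 ≤ c) (hC : 0 ≤ C)
    (hx : 0 < x) :
    (⌊c * x⁻¹ ^ a⌋₊ : ℝ) ^ u * (C * x) ^ r ≤ c ^ u * C ^ r * x ^ (r - a * u) := by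
  calc _ ≤ (c * x ^ (-a)) ^ u * (C * x) ^ r := by
        gcongr
        rw [Real.rpow_neg hx.le, ← Real.inv_rpow hx.le]
        exact Nat.floor_le (by positivity)
    _ = c ^ u * C ^ r * (x ^ (-a * u) * x ^ r) := by
        rw [mul_pow, Real.mul_rpow hC hx.le, ← Real.rpow_natCast (x ^ (-a)),
          ← Real.rpow_mul hx.le]
        ring
    _ = _ := by rw [← Real.rpow_add hx]; ring_nf

theorem tendsto_floor_rpow_pow_mul_rpow {a c C r : ℝ} {u : ℕ} (hc : 0 ≤ c) (hC : 0 < C)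
    (hr : a * u + 1 ≤ r) :
    Tendsto (fun k : ℕ => (⌊c * ((k : ℝ) / Real.log k) ^ a⌋₊ : ℝ) ^ u *
      (C * Real.log k / k) ^ r) atTop (nhds 0) := by
  refine squeeze_zero' (Eventually.of_forall fun k => by positivity) ?_
    (by simpa using tendsto_log_div_self_natCast.const_mul (c ^ u * C ^ r))
  filter_upwards [eventually_mul_log_div_self_mem_Ioc one_pos] with k ⟨hx0, hx1⟩
  rw [one_mul] at hx0 hx1
  have := floor_rpow_pow_mul_rpow_le (a := a) (r := r) (u := u) hc hC.le hx0
  rw [inv_div, ← mul_div_assoc] at this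
  refine this.trans (mul_le_mul_of_nonneg_left ?_ (by positivity))
  simpa using Real.rpow_le_rpow_of_exponent_ge hx0 hx1 (show 1 ≤ r - a * u by linarith)

/-- Whp `Δ⁽²⁾_H < D` for a constant `D = D(H)`. -/
theorem deltaH2_bounded {h : ℕ} (H : SimpleGraph (Fin h)) (hH : StrictlyTwoBalanced H)
    (hm : 1 < m2 H) :
    ∃ D : ℝ, ∀ C : ℝ, 0 < C → ∃ c₀ : ℝ, 0 < c₀ ∧ ∀ c : ℝ, 0 < c → c ≤ c₀ →
      Tendsto (fun k : ℕ =>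
          gnpProb ⌊c * ((k : ℝ) / Real.log k) ^ m2 H⌋₊ (C * Real.log k / k)
            {G | D ≤ (deltaH2 H G : ℝ)})
        atTop (nhds 0) := by
  obtain ⟨δ, hδ, hgap⟩ := hH.exists_pos_forall_edgeExcess_le
  set N := ⌈2 * m2 H / δ⌉₊
  have hN : 2 * m2 H ≤ N * δ := (div_le_iff₀ hδ).1 (Nat.le_ceil _)
  refine ⟨(N * h) ^ h + 1, fun C hC => ⟨1, one_pos, fun c hc _ => ?_⟩⟩
  have hp := eventually_mul_log_div_self_mem_Ioc hC
  refine squeeze_zero' (hp.mono fun k hk => gnpProb_nonneg hk.1.le hk.2 _)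
    (hp.mono fun k hk => gnpProb_le_of_exists_edgeExcess_ge hk.1 hk.2 fun G hG =>
      exists_edgeExcess_ge_of_lt_deltaH2 hH hm hgap N (by exact_mod_cast hG)) ?_
  simpa using tendsto_finsetSum (range ((N + 1) * h + 1)) fun u _ =>
    (tendsto_floor_rpow_pow_mul_rpow hc.le hC (by nlinarith)).const_mul (2 ^ u.choose 2 : ℝ)
end
end

section
/- Let H be a fixed graph with v_H ≥ 3 vertices and at least one edge, and let p = p(k) satisfy p = Θ((\log k)/k) as k → ∞. Let n = n(k) ≥ k, fix a k-element vertex subset K of G_{n,p}, and let 𝓗_K denote the collection of all copies of H in G_{n,p} that have at least one edge with both endpoints in K. Then for every δ > 0, setting t := ⌈(δ·\binom{k}{2}·p)^{1/v_H}⌉, one has Pr(|𝓗_K| ≥ δ·\binom{k}{2}·p) ≥ p^{\binom{v_H}{2}·t²}, and this lower bound is e^{−o(k)} as k → ∞; in particular, for every ε > 0 and all sufficiently large k, Pr(|𝓗_K| ≥ δ·\binom{k}{2}·p) ≥ e^{−εk}. -/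
open Finset Filter
open scoped Classical

noncomputable section

/-- `H_K`: the copies of `H` in `G` having at least one edge with both endpoints in `K`. -/
def HKcol {h n : ℕ} (H : SimpleGraph (Fin h)) (G : Finset (Sym2 (Fin n)))
    (K : Finset (Fin n)) : Finset (Finset (Fin n) × Finset (Sym2 (Fin n))) :=
  (copies H G).filter fun P => ∃ e ∈ P.2, ∀ v ∈ e, v ∈ K

/-!
Embed the blow-up `H[t]` of `H` (every vertex replaced by `t` independent vertices, every edge
by a `K_{t,t}`) into `K`, with `t = ⌈(δ C(k,2) p)^{1/v_H}⌉`; it fits once `v_H t ≤ k`. With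
probability `p^{e(H[t])} ≥ p^{C(v_H,2) t²}` all its edges are present, and then each of the
`t^{v_H}` transversals `v ↦ (v, f v)` is a copy of `H` with its edges inside `K`, so
`|𝓗_K| ≥ t^{v_H} ≥ δ C(k,2) p`. Since `v_H ≥ 3`, `t = O((k log k)^{1/3})`, and
`log (1/p) = O(log k)`, the exponent `C(v_H,2) t² log (1/p) = O(k^{2/3} (log k)^{5/3})` is `o(k)`.
-/

open Real Asymptotics

theorem gnpProb_mono {n : ℕ} {p : ℝ} (hp0 : 0 ≤ p) (hp1 : p ≤ 1)
    {A B : Set (Finset (Sym2 (Fin n)))} (hAB : A ⊆ B) :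
    gnpProb n p A ≤ gnpProb n p B := by
  refine Finset.sum_le_sum fun G _ => ?_
  by_cases hGA : G ∈ A
  · rw [if_pos hGA, if_pos (hAB hGA)]
  · rw [if_neg hGA]
    split_ifs
    · exact mul_nonneg (pow_nonneg hp0 _) (pow_nonneg (by linarith) _)
    · rfl

theorem gnpProb_setOf_superset (n : ℕ) (p : ℝ) {E₀ : Finset (Sym2 (Fin n))}
    (hE₀ : E₀ ⊆ allEdges n) :
    gnpProb n p {G | E₀ ⊆ G} = p ^ E₀.card := by
  set T := allEdges n
  have hdisj : ∀ S ∈ (T \ E₀).powerset, Disjoint S E₀ := fun S hS =>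
    sdiff_disjoint.mono_left (mem_powerset.mp hS)
  calc gnpProb n p {G | E₀ ⊆ G}
      = ∑ G ∈ T.powerset with E₀ ⊆ G, p ^ G.card * (1 - p) ^ (T.card - G.card) := by
        simp only [gnpProb, sum_filter, Set.mem_ofPred_eq, T]
        congr!
    _ = ∑ S ∈ (T \ E₀).powerset,
          p ^ E₀.card * (p ^ S.card * (1 - p) ^ ((T \ E₀).card - S.card)) := by
        refine sum_nbij' (· \ E₀) (· ∪ E₀) (fun G hG => ?_) (fun S hS => ?_)
          (fun G hG => ?_) (fun S hS => ?_) (fun G hG => ?_)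
        · simp only [mem_filter, mem_powerset] at hG
          exact mem_powerset.mpr (sdiff_subset_sdiff hG.1 le_rfl)
        · have hST := mem_powerset.mp hS
          simp only [mem_filter, mem_powerset]
          exact ⟨union_subset (hST.trans sdiff_subset) hE₀, subset_union_right⟩
        · exact sdiff_union_of_subset (mem_filter.mp hG).2
        · exact union_sdiff_cancel_right (hdisj S hS)
        · have hG' := mem_filter.mp hG
          have hS : G \ E₀ ∈ (T \ E₀).powerset :=
            mem_powerset.mpr (sdiff_subset_sdiff (mem_powerset.mp hG'.1) le_rfl)
          have hcard := card_union_of_disjoint (hdisj _ hS)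
          rw [sdiff_union_of_subset hG'.2] at hcard
          have hST := card_le_card (mem_powerset.mp hS)
          rw [card_sdiff_of_subset hE₀] at hST ⊢
          rw [hcard, pow_add, show T.card - ((G \ E₀).card + E₀.card)
            = T.card - E₀.card - (G \ E₀).card by omega]
          ring
    _ = p ^ E₀.card := by
        rw [← mul_sum, sum_pow_mul_eq_add_pow, add_sub_cancel, one_pow, mul_one]

theorem image_edgeFinset_subset_allEdges {α : Type*} [Fintype α] {n : ℕ} (Γ : SimpleGraph α)
    (ι : α ↪ Fin n) : Γ.edgeFinset.image (Sym2.map ι) ⊆ allEdges n := by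
  intro e he
  obtain ⟨e₀, he₀, rfl⟩ := mem_image.mp he
  rw [SimpleGraph.mem_edgeFinset] at he₀
  rw [allEdges, mem_filter, Sym2.isDiag_map ι.injective]
  exact ⟨mem_univ _, Γ.not_isDiag_of_mem_edgeSet he₀⟩

def blowup {V : Type*} (H : SimpleGraph V) (t : ℕ) : SimpleGraph (V × Fin t) :=
  H.comap Prod.fst

theorem neighborFinset_blowup {V : Type*} [Fintype V] (H : SimpleGraph V) (t : ℕ) (v : V)
    (a : Fin t) : (blowup H t).neighborFinset (v, a) = H.neighborFinset v ×ˢ univ := by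
  ext y
  rw [SimpleGraph.mem_neighborFinset]
  simp [blowup]

theorem card_edgeFinset_blowup {V : Type*} [Fintype V] (H : SimpleGraph V) (t : ℕ) :
    (blowup H t).edgeFinset.card = t ^ 2 * H.edgeFinset.card := by
  have hdeg : ∑ x, (blowup H t).degree x = t ^ 2 * ∑ v, H.degree v := by
    simp only [Fintype.sum_prod_type, ← SimpleGraph.card_neighborFinset_eq_degree,
      neighborFinset_blowup, card_product, card_univ, Fintype.card_fin, sum_const, smul_eq_mul,
      mul_sum]
    ring_nf
  rw [SimpleGraph.sum_degrees_eq_twice_card_edges, SimpleGraph.sum_degrees_eq_twice_card_edges]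
    at hdeg
  linarith

def copyAlong {h n : ℕ} (H : SimpleGraph (Fin h)) (φ : Fin h ↪ Fin n) :
    Finset (Fin n) × Finset (Sym2 (Fin n)) :=
  (univ.image φ, H.edgeFinset.image (Sym2.map φ))

theorem copyAlong_mem_HKcol {h n : ℕ} {H : SimpleGraph (Fin h)} (he : H.edgeSet.Nonempty)
    {G : Finset (Sym2 (Fin n))} {K : Finset (Fin n)} (φ : Fin h ↪ Fin n) (hφK : ∀ i, φ i ∈ K)
    (hφG : H.edgeFinset.image (Sym2.map φ) ⊆ G) : copyAlong H φ ∈ HKcol H G K := by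
  obtain ⟨e, he⟩ := he
  refine mem_filter.mpr ⟨mem_filter.mpr ⟨mem_univ _, φ, rfl, by simp [copyAlong], hφG⟩, ?_⟩
  refine ⟨Sym2.map φ e, mem_image_of_mem _ (SimpleGraph.mem_edgeFinset.mpr he), fun v hv => ?_⟩
  obtain ⟨w, -, rfl⟩ := Sym2.mem_map.mp hv
  exact hφK w

def transversal {V : Type*} {t : ℕ} (f : V → Fin t) : V ↪ V × Fin t :=
  ⟨fun v => (v, f v), fun _ _ hvw => congrArg Prod.fst hvw⟩

theorem image_map_transversal_subset {V : Type*} [Fintype V] [DecidableEq V]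
    (H : SimpleGraph V) {t : ℕ} (f : V → Fin t) :
    H.edgeFinset.image (Sym2.map (transversal f)) ⊆ (blowup H t).edgeFinset := by
  intro e he
  obtain ⟨e₀, he₀, rfl⟩ := mem_image.mp he
  induction e₀ using Sym2.ind with
  | _ v w =>
    rw [SimpleGraph.mem_edgeFinset] at he₀ ⊢
    exact he₀

theorem image_transversal_trans_injective {V : Type*} [Fintype V] {t n : ℕ}
    (ι : V × Fin t ↪ Fin n) :
    Function.Injective fun f : V → Fin t => univ.image ((transversal f).trans ι) := by
  intro f g hfg
  funext v
  have hv : ι (v, f v) ∈ univ.image ((transversal g).trans ι) := by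
    have hfg' : univ.image ((transversal f).trans ι) = univ.image ((transversal g).trans ι) := hfg
    rw [← hfg']
    exact mem_image_of_mem _ (mem_univ v)
  obtain ⟨w, -, hw⟩ := mem_image.mp hv
  obtain ⟨rfl, hgf⟩ := Prod.mk.inj (ι.injective hw)
  exact hgf.symm

theorem pow_le_card_HKcol {h n t : ℕ} {H : SimpleGraph (Fin h)} (he : H.edgeSet.Nonempty)
    {G : Finset (Sym2 (Fin n))} {K : Finset (Fin n)} (ι : Fin h × Fin t ↪ Fin n)
    (hιK : ∀ z, ι z ∈ K) (hιG : (blowup H t).edgeFinset.image (Sym2.map ι) ⊆ G) :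
    t ^ h ≤ (HKcol H G K).card := by
  have hcopy : ∀ f : Fin h → Fin t, H.edgeFinset.image (Sym2.map ((transversal f).trans ι)) ⊆ G :=
    fun f => by
      rw [Function.Embedding.coe_trans, Sym2.map_comp, ← image_image]
      exact (image_subset_image (image_map_transversal_subset H f)).trans hιG
  calc t ^ h = (univ : Finset (Fin h → Fin t)).card := by simp
    _ ≤ (HKcol H G K).card :=
      card_le_card_of_injOn (fun f => copyAlong H ((transversal f).trans ι))
        (fun f _ => copyAlong_mem_HKcol he _ (fun _ => hιK _) (hcopy f))
        (fun f _ g _ hfg => image_transversal_trans_injective ι (congrArg Prod.fst hfg))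

theorem pow_le_gnpProb_le_card_HKcol {h n t : ℕ} {H : SimpleGraph (Fin h)}
    (he : H.edgeSet.Nonempty) {K : Finset (Fin n)} (hK : h * t ≤ K.card) {p : ℝ} (hp0 : 0 ≤ p)
    (hp1 : p ≤ 1) {x : ℝ} (hx : x ≤ (t : ℝ) ^ h) :
    p ^ (h.choose 2 * t ^ 2) ≤ gnpProb n p {G | x ≤ ((HKcol H G K).card : ℝ)} := by
  obtain ⟨ι⟩ : Nonempty (Fin h × Fin t ↪ K) :=
    Function.Embedding.nonempty_of_card_le (by simpa using hK)
  set E₀ := (blowup H t).edgeFinset.image (Sym2.map (ι.trans (Function.Embedding.subtype _)))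
  have hE₀ : E₀.card ≤ h.choose 2 * t ^ 2 :=
    calc E₀.card ≤ (blowup H t).edgeFinset.card := card_image_le
      _ = t ^ 2 * H.edgeFinset.card := card_edgeFinset_blowup H t
      _ ≤ t ^ 2 * h.choose 2 := by
        gcongr
        simpa using SimpleGraph.card_edgeFinset_le_card_choose_two (G := H)
      _ = h.choose 2 * t ^ 2 := mul_comm ..
  calc p ^ (h.choose 2 * t ^ 2) ≤ p ^ E₀.card := pow_le_pow_of_le_one hp0 hp1 hE₀
    _ = gnpProb n p {G | E₀ ⊆ G} :=
      (gnpProb_setOf_superset n p (image_edgeFinset_subset_allEdges _ _)).symm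
    _ ≤ gnpProb n p {G | x ≤ ((HKcol H G K).card : ℝ)} :=
      gnpProb_mono hp0 hp1 fun G hG => hx.trans <| by
        exact_mod_cast pow_le_card_HKcol he _ (fun z => (ι z).2) hG

theorem le_natCeil_rpow_inv_pow (x : ℝ) {h : ℕ} (hh : h ≠ 0) :
    x ≤ (⌈x ^ ((1 : ℝ) / h)⌉₊ : ℝ) ^ h := by
  rcases le_or_gt x 0 with hx | hx
  · exact hx.trans (by positivity)
  · calc x = (x ^ ((1 : ℝ) / h)) ^ h := by rw [one_div, rpow_inv_natCast_pow hx.le hh]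
      _ ≤ (⌈x ^ ((1 : ℝ) / h)⌉₊ : ℝ) ^ h := by gcongr; exact Nat.le_ceil _

theorem natCeil_rpow_inv_le {h : ℕ} (hh : 3 ≤ h) {x y : ℝ} (hx : 0 ≤ x) (hxy : x ≤ y)
    (hy : 1 ≤ y) : (⌈x ^ ((1 : ℝ) / h)⌉₊ : ℝ) ≤ 2 * y ^ ((1 : ℝ) / 3) := by
  have hroot : x ^ ((1 : ℝ) / h) ≤ y ^ ((1 : ℝ) / 3) :=
    calc x ^ ((1 : ℝ) / h) ≤ y ^ ((1 : ℝ) / h) := by gcongr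
      _ ≤ y ^ ((1 : ℝ) / 3) := by
        gcongr
        exact_mod_cast hh
  have hone : 1 ≤ y ^ ((1 : ℝ) / 3) := one_le_rpow hy (by norm_num)
  linarith [Nat.ceil_lt_add_one (rpow_nonneg hx ((1 : ℝ) / h))]

theorem neg_log_le_two_mul_log {c z q : ℝ} (hc : 0 < c) (hz : 0 < z) (hlog : 1 ≤ log z)
    (hcz : -log c ≤ log z) (hq : c * log z / z ≤ q) : -log q ≤ 2 * log z := by
  have h := log_le_log (by positivity) hq
  rw [log_div (by positivity) hz.ne', log_mul hc.ne' (by positivity)] at h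
  linarith [log_nonneg hlog]

theorem isLittleO_cbrt_mul_log_pow_mul_log_pow {j : ℕ} (hj : j < 3) (b : ℕ) :
    (fun x : ℝ => ((x * log x) ^ ((1 : ℝ) / 3)) ^ j * log x ^ b) =o[atTop] id := by
  have ha : (j : ℝ) / 3 < 1 := by
    rw [div_lt_one (by norm_num)]
    exact_mod_cast hj
  have key := (isBigO_refl (fun x : ℝ => x ^ ((j : ℝ) / 3)) atTop).mul_isLittleO
    (isLittleO_log_rpow_rpow_atTop ((j : ℝ) / 3 + b) (sub_pos.mpr ha))
  refine key.congr' ?_ ?_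
  · filter_upwards [eventually_gt_atTop 1] with x hx
    have hl : 0 < log x := log_pos hx
    rw [rpow_add hl, rpow_natCast, ← mul_assoc, ← mul_rpow (by linarith) hl.le,
      ← rpow_natCast _ j, ← rpow_mul (by positivity)]
    ring_nf
  · filter_upwards [eventually_gt_atTop 0] with x hx
    rw [← rpow_add hx]
    norm_num

theorem eventually_mul_cbrt_pow_mul_log_pow_le (C : ℝ) {j : ℕ} (hj : j < 3) (b : ℕ) {ε : ℝ}
    (hε : 0 < ε) :
    ∀ᶠ k : ℕ in atTop, C * (((k : ℝ) * log k) ^ ((1 : ℝ) / 3)) ^ j * log k ^ b ≤ ε * k := by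
  filter_upwards [(((isLittleO_cbrt_mul_log_pow_mul_log_pow hj b).const_mul_left C).comp_tendsto
    tendsto_natCast_atTop_atTop).def hε] with k hk
  simp only [Function.comp_apply, id, norm_natCast, ← mul_assoc] at hk
  exact (le_abs_self _).trans hk

theorem eventually_pos_le_one_neg_log_le {p : ℕ → ℝ} {c₁ c₂ : ℝ} (hc₁ : 0 < c₁)
    (hp : ∀ᶠ k : ℕ in atTop, c₁ * log k / k ≤ p k ∧ p k ≤ c₂ * log k / k) :
    ∀ᶠ k : ℕ in atTop, 0 < p k ∧ p k ≤ 1 ∧ -log (p k) ≤ 2 * log k := by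
  have hlog : Tendsto (fun k : ℕ => log k) atTop atTop :=
    tendsto_log_atTop.comp tendsto_natCast_atTop_atTop
  filter_upwards [hp, hlog.eventually_ge_atTop 1, hlog.eventually_ge_atTop (-log c₁),
    eventually_mul_cbrt_pow_mul_log_pow_le c₂ (j := 0) (by norm_num) 1 one_pos,
    eventually_gt_atTop 0] with k ⟨hlo, hhi⟩ hlog1 hlogc hc₂k hk
  have hk : (0 : ℝ) < k := by exact_mod_cast hk
  refine ⟨lt_of_lt_of_le (by positivity) hlo, ?_, neg_log_le_two_mul_log hc₁ hk hlog1 hlogc hlo⟩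
  rw [pow_zero, mul_one, pow_one, one_mul] at hc₂k
  exact hhi.trans ((div_le_one hk).mpr hc₂k)

theorem eventually_natCeil_rpow_le {h : ℕ} (hh : 3 ≤ h) {p : ℕ → ℝ} {c δ : ℝ} (hc : 0 < c)
    (hδ : 0 < δ) (hp : ∀ᶠ k : ℕ in atTop, 0 ≤ p k ∧ p k ≤ c * log k / k) :
    ∀ᶠ k : ℕ in atTop, (⌈(δ * (k.choose 2 : ℝ) * p k) ^ ((1 : ℝ) / h)⌉₊ : ℝ) ≤
      2 * (δ * c) ^ ((1 : ℝ) / 3) * ((k : ℝ) * log k) ^ ((1 : ℝ) / 3) := by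
  have hy : Tendsto (fun k : ℕ => δ * c * ((k : ℝ) * log k)) atTop atTop :=
    (tendsto_natCast_atTop_atTop.atTop_mul_atTop₀
      (tendsto_log_atTop.comp tendsto_natCast_atTop_atTop)).const_mul_atTop (by positivity)
  filter_upwards [hp, hy.eventually_ge_atTop 1, eventually_gt_atTop 0]
    with k ⟨hp0, hpc⟩ hy1 hk
  have hk' : (0 : ℝ) < k := by exact_mod_cast hk
  have hxy : δ * k.choose 2 * p k ≤ δ * c * (k * log k) :=
    calc δ * k.choose 2 * p k ≤ δ * (k : ℝ) ^ 2 * (c * log k / k) := by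
          gcongr
          exact_mod_cast Nat.choose_le_pow k 2
      _ = δ * c * (k * log k) := by field_simp
  rw [mul_assoc (2 : ℝ), ← mul_rpow (by positivity) (mul_nonneg hk'.le (log_natCast_nonneg k))]
  exact natCeil_rpow_inv_le hh (by positivity) hxy hy1

theorem eventually_tail_exponent_bounds {h : ℕ} (hh : 3 ≤ h) {p : ℕ → ℝ} {c₁ c₂ δ ε : ℝ}
    (hc₁ : 0 < c₁) (hc₂ : 0 < c₂) (hδ : 0 < δ) (hε : 0 < ε)
    (hp : ∀ᶠ k : ℕ in atTop, c₁ * log k / k ≤ p k ∧ p k ≤ c₂ * log k / k) :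
    ∀ᶠ k : ℕ in atTop, 0 < p k ∧ p k ≤ 1 ∧
      h * ⌈(δ * (k.choose 2 : ℝ) * p k) ^ ((1 : ℝ) / h)⌉₊ ≤ k ∧
      exp (-(ε * k)) ≤
        p k ^ (h.choose 2 * ⌈(δ * (k.choose 2 : ℝ) * p k) ^ ((1 : ℝ) / h)⌉₊ ^ 2) := by
  have hprob := eventually_pos_le_one_neg_log_le hc₁ hp
  have hceil := eventually_natCeil_rpow_le hh hc₂ hδ <| by
    filter_upwards [hp, hprob] with k hk hk' using ⟨hk'.1.le, hk.2⟩
  set A := (δ * c₂) ^ ((1 : ℝ) / 3)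
  filter_upwards [hprob, hceil,
    eventually_mul_cbrt_pow_mul_log_pow_le (2 * h * A) (j := 1) (by norm_num) 0 one_pos,
    eventually_mul_cbrt_pow_mul_log_pow_le (8 * h.choose 2 * A ^ 2) (j := 2) (by norm_num) 1 hε]
    with k ⟨hp0, hp1, hlogp⟩ ht hfit hexp
  set t := ⌈(δ * (k.choose 2 : ℝ) * p k) ^ ((1 : ℝ) / h)⌉₊
  set s := ((k : ℝ) * log k) ^ ((1 : ℝ) / 3)
  refine ⟨hp0, hp1, ?_, ?_⟩
  · have hht : (h : ℝ) * t ≤ k :=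
      calc (h : ℝ) * t ≤ h * (2 * A * s) := by gcongr
        _ = 2 * h * A * s ^ 1 * log k ^ 0 := by ring
        _ ≤ 1 * k := hfit
        _ = k := one_mul _
    exact_mod_cast hht
  · have hN : ((h.choose 2 * t ^ 2 : ℕ) : ℝ) * -log (p k) ≤ ε * k :=
      calc ((h.choose 2 * t ^ 2 : ℕ) : ℝ) * -log (p k)
          ≤ (h.choose 2 * (2 * A * s) ^ 2) * (2 * log k) := by
            refine mul_le_mul ?_ hlogp (neg_nonneg.mpr (log_nonpos hp0.le hp1)) (by positivity)
            push_cast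
            gcongr
        _ = 8 * h.choose 2 * A ^ 2 * s ^ 2 * log k ^ 1 := by ring
        _ ≤ ε * k := hexp
    rw [← exp_log (pow_pos hp0 _), log_pow, exp_le_exp]
    linarith

theorem HK_upper_tail_lower_bound_general {h : ℕ} (H : SimpleGraph (Fin h))
    (hv : 3 ≤ h) (he : H.edgeSet.Nonempty)
    (p : ℕ → ℝ) (c₁ c₂ : ℝ) (hc₁ : 0 < c₁) (hc₂ : 0 < c₂)
    (hp : ∀ᶠ k : ℕ in atTop,
      c₁ * Real.log k / k ≤ p k ∧ p k ≤ c₂ * Real.log k / k)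
    (n : ℕ → ℕ)
    (K : (k : ℕ) → Finset (Fin (n k))) (hK : ∀ k, (K k).card = k)
    (δ : ℝ) (hδ : 0 < δ) (ε : ℝ) (hε : 0 < ε) :
    ∀ᶠ k : ℕ in atTop,
      p k ^ (h.choose 2 * ⌈(δ * (k.choose 2 : ℝ) * p k) ^ ((1 : ℝ) / h)⌉₊ ^ 2) ≤
        gnpProb (n k) (p k) {G | δ * (k.choose 2 : ℝ) * p k ≤ ((HKcol H G (K k)).card : ℝ)} ∧
      Real.exp (-(ε * k)) ≤ gnpProb (n k) (p k) {G | δ * (k.choose 2 : ℝ) * p k ≤ ((HKcol H G (K k)).card : ℝ)} := by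
  filter_upwards [eventually_tail_exponent_bounds hv hc₁ hc₂ hδ hε hp]
    with k ⟨hp0, hp1, hfit, hexp⟩
  have hprob := pow_le_gnpProb_le_card_HKcol he (hfit.trans (hK k).ge) hp0.le hp1
    (le_natCeil_rpow_inv_pow _ (by omega))
  exact ⟨hprob, hexp.trans hprob⟩

/-- Lower bound on the upper tail of `|H_K|`: for `p = Θ(log k / k)`, a fixed `k`-set `K`
and any `δ > 0`, with `t = ⌈(δ C(k,2) p)^{1/v_H}⌉` one has
`Pr(|H_K| ≥ δ C(k,2) p) ≥ p^{C(v_H,2) t²} ≥ e^{-ε k}` for all large `k`. -/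
theorem HK_upper_tail_lower_bound {h : ℕ} (H : SimpleGraph (Fin h))
    (hv : 3 ≤ h) (he : H.edgeSet.Nonempty)
    (p : ℕ → ℝ) (c₁ c₂ : ℝ) (hc₁ : 0 < c₁) (hc₂ : 0 < c₂)
    (hp : ∀ᶠ k : ℕ in atTop,
      c₁ * Real.log k / k ≤ p k ∧ p k ≤ c₂ * Real.log k / k)
    (n : ℕ → ℕ) (hn : ∀ k, k ≤ n k)
    (K : (k : ℕ) → Finset (Fin (n k))) (hK : ∀ k, (K k).card = k)
    (δ : ℝ) (hδ : 0 < δ) (ε : ℝ) (hε : 0 < ε) :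
    ∀ᶠ k : ℕ in atTop,
      p k ^ (h.choose 2 * ⌈(δ * (k.choose 2 : ℝ) * p k) ^ ((1 : ℝ) / h)⌉₊ ^ 2) ≤
        gnpProb (n k) (p k) {G | δ * (k.choose 2 : ℝ) * p k ≤ ((HKcol H G (K k)).card : ℝ)} ∧
      Real.exp (-(ε * k)) ≤ gnpProb (n k) (p k) {G | δ * (k.choose 2 : ℝ) * p k ≤ ((HKcol H G (K k)).card : ℝ)} :=
  HK_upper_tail_lower_bound_general H hv he p c₁ c₂ hc₁ hc₂ hp n K hK δ hδ ε hε
end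
end
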